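/- arXiv:2209.02170 — 8 statements merged into one kernel-verified Lean document; each statement's English description precedes it below -/
import Mathlib

section
/- Let p be a prime, k a positive integer with p-adic valuation v. For any integers i₁, i₂ > 0 with k ≥ 2, there exists a natural number r ≥ 0 such that i₁ + i₂ ≥ p^r + 1 and the p-adic valuation of the multinomial coefficient (k + i₁ + i₂ - 2)! / (i₁! · i₂! · (k-2)!) is at least v - r. -/
/-!
Write `N = i₁ + i₂ + (k - 2)` and `r = ⌊log_p (i₁ + i₂ - 1)⌋`, so that `p ^ r < i₁ + i₂ ≤ p ^ (r + 1)`.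
By Legendre's formula the valuation of `N! / (i₁! i₂! (k - 2)!)` counts the levels `i ≥ 1` at which
`⌊N / p^i⌋` exceeds `⌊i₁ / p^i⌋ + ⌊i₂ / p^i⌋ + ⌊(k - 2) / p^i⌋`. Every level `r < i ≤ v` is such
a level: there `i₁, i₂ < p^i`, while `p^i ∣ k = (k - 2) + 2 ≤ N`, so `⌊(k - 2) / p^i⌋ < ⌊k / p^i⌋`.
-/

open Finset

namespace Nat

theorem div_add_div_add_div_lt_of_dvd_add {q a b c d : ℕ} (ha : a < q) (hb : b < q)
    (hd : 0 < d) (hdab : d ≤ a + b) (hq : q ∣ c + d) :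
    a / q + b / q + c / q < (a + b + c) / q := by
  rw [Nat.div_eq_of_lt ha, Nat.div_eq_of_lt hb, zero_add, zero_add]
  calc c / q < (c + d) / q := Nat.div_lt_div_of_lt_of_dvd hq (by omega)
    _ ≤ (a + b + c) / q := Nat.div_le_div_right (by omega)

theorem card_le_padicValNat_factorial_div {p : ℕ} [Fact p.Prime] (a b c : ℕ) (s : Finset ℕ)
    (hs : ∀ i ∈ s, 0 < i ∧ a / p ^ i + b / p ^ i + c / p ^ i < (a + b + c) / p ^ i) :
    #s ≤ padicValNat p ((a + b + c)! / (a ! * b ! * c !)) := by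
  set n := a + b + c
  have hdvd : a ! * b ! * c ! ∣ n ! :=
    (mul_dvd_mul_right (factorial_mul_factorial_dvd_factorial_add a b) _).trans
      (factorial_mul_factorial_dvd_factorial_add _ _)
  have hlog : ∀ m ≤ n, log p m < n + 1 := fun m hm => by
    have := log_le_self p m
    omega
  have hsub : s ⊆ Ico 1 (n + 1) := fun i hi => by
    obtain ⟨hi0, hcarry⟩ := hs i hi
    have hpow : p ^ i ≤ n := by
      by_contra! h
      rw [Nat.div_eq_of_lt h] at hcarry
      exact Nat.not_lt_zero _ hcarry
    have := i.lt_pow_self (Fact.out : p.Prime).one_lt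
    simp only [mem_Ico]
    omega
  have hterm : ∀ i ∈ Ico 1 (n + 1),
      a / p ^ i + b / p ^ i + c / p ^ i + (if i ∈ s then 1 else 0) ≤ n / p ^ i := by
    intro i _
    split_ifs with hi
    · exact (hs i hi).2
    · calc a / p ^ i + b / p ^ i + c / p ^ i + 0
          ≤ (a + b) / p ^ i + c / p ^ i := by
            rw [add_zero]
            exact Nat.add_le_add_right div_add_div_le_add_div _
        _ ≤ n / p ^ i := div_add_div_le_add_div
  have hsum := sum_le_sum hterm
  rw [sum_add_distrib, sum_add_distrib, sum_add_distrib, sum_boole, filter_mem_eq_inter,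
    inter_eq_right.mpr hsub, Nat.cast_id] at hsum
  rw [padicValNat.div_of_dvd hdvd, padicValNat.mul (by positivity) (factorial_ne_zero _),
    padicValNat.mul (factorial_ne_zero _) (factorial_ne_zero _),
    padicValNat_factorial (hlog n le_rfl), padicValNat_factorial (hlog a (by omega)),
    padicValNat_factorial (hlog b (by omega)), padicValNat_factorial (hlog c (by omega))]
  omega

end Nat

open Nat in
/-- For a prime `p` and `k ≥ 2` with `v = v_p(k)`, for any `i₁, i₂ > 0` there exists
`r ∈ ℕ` with `i₁ + i₂ ≥ p^r + 1` and `v_p((k+i₁+i₂-2)!/(i₁!·i₂!·(k-2)!)) ≥ v - r`. -/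
theorem multinomial_valuation_lower_bound (p : ℕ) (hp : p.Prime) (k : ℕ) (hk : 2 ≤ k)
    (v : ℕ) (hv : v = padicValNat p k) (i₁ i₂ : ℕ) (hi₁ : 0 < i₁) (hi₂ : 0 < i₂) :
    ∃ r : ℕ, p ^ r + 1 ≤ i₁ + i₂ ∧
      v - r ≤ padicValNat p
        ((k + i₁ + i₂ - 2).factorial / (i₁.factorial * i₂.factorial * (k - 2).factorial)) := by
  have : Fact p.Prime := ⟨hp⟩
  have hpow_le : p ^ log p (i₁ + i₂ - 1) ≤ i₁ + i₂ - 1 := pow_log_le_self p (by omega)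
  have hlt_pow : i₁ + i₂ - 1 < p ^ (log p (i₁ + i₂ - 1) + 1) := lt_pow_succ_log_self hp.one_lt _
  generalize log p (i₁ + i₂ - 1) = r at hpow_le hlt_pow
  refine ⟨r, by omega, ?_⟩
  rw [← card_Ioc, show k + i₁ + i₂ - 2 = i₁ + i₂ + (k - 2) by omega]
  refine card_le_padicValNat_factorial_div _ _ _ _ fun i hi => ?_
  obtain ⟨hri, hiv⟩ := mem_Ioc.mp hi
  have hsum_le : i₁ + i₂ ≤ p ^ i := by
    have : p ^ (r + 1) ≤ p ^ i := Nat.pow_le_pow_right hp.pos hri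
    omega
  have hdvd : p ^ i ∣ k - 2 + 2 :=
    (Nat.sub_add_cancel hk).symm ▸ (pow_dvd_pow p hiv).trans (hv ▸ pow_padicValNat_dvd)
  exact ⟨by omega, div_add_div_add_div_lt_of_dvd_add (by omega) (by omega) two_pos (by omega) hdvd⟩
end

section
/- Let κ be a finite field, V a finite-dimensional κ-vector space, ψ: κ → ℂ^× a nontrivial additive character, and Q: V → κ a polynomial function of degree at most 2. Let B(v,w) = Q(v+w) - Q(v) - Q(w) + Q(0) be the associated bilinear form and W its kernel (the set of v with B(v,w)=0 for all w). Then |∑_{v∈V} ψ(Q(v))| equals |κ|^{(dim V + dim W)/2} if v ↦ ψ(Q(v) - Q(0)) is trivial on W, and equals 0 otherwise. -/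
/-!
Write `S = ∑ v, ψ (Q v)` and `B` for the polar form of `Q`. Expanding `S * conj S` and
substituting `v = w + u` gives `∑ u, ψ (Q u - Q 0) * ∑ w, ψ (B u w)`; the inner sum is `|V|`
when `u` lies in the radical `W = ker B` and `0` otherwise. On `W` the map `u ↦ Q u - Q 0` is
additive, so `u ↦ ψ (Q u - Q 0)` is a character of `W`, and orthogonality gives
`|S|² = |V| |W|` when it is trivial and `|S|² = 0` otherwise.
-/

open Finset

open scoped Classical in
theorem AddChar.sum_apply_linearMap {κ V R : Type*} [Field κ] [AddCommGroup V] [Module κ V]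
    [Fintype V] [CommRing R] [IsDomain R] {ψ : AddChar κ R} (hψ : ψ ≠ 1) (f : V →ₗ[κ] κ) :
    ∑ v, ψ (f v) = if f = 0 then (Fintype.card V : R) else 0 := by
  split_ifs with hf
  · simp [hf]
  have hχ : ψ.compAddMonoidHom f.toAddMonoidHom ≠ 0 := fun h ↦ hψ <|
    AddChar.compAddMonoidHom_injective_left _ (f.surjective hf) (h.trans rfl)
  simpa [hχ] using (ψ.compAddMonoidHom f.toAddMonoidHom).sum_eq_ite

theorem QuadraticMap.apply_add_sub_sub_add_eq_polarBilin {κ V : Type*} [Field κ]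
    [AddCommGroup V] [Module κ V] {Q : V → κ} (Q₂ : QuadraticForm κ V) (L : V →ₗ[κ] κ) (c : κ)
    (hQ : ∀ v, Q v = Q₂ v + L v + c) (u w : V) :
    Q (u + w) - Q u - Q w + Q 0 = Q₂.polarBilin u w := by
  simp only [polarBilin_apply_apply, polar, hQ, map_add, map_zero]
  ring

section PolarKernel

variable {κ V : Type*} [Field κ] [AddCommGroup V] [Module κ V]
  {Q : V → κ} {B : LinearMap.BilinForm κ V}

theorem apply_add_sub_apply_zero_of_mem_ker (hB : ∀ u w, Q (u + w) - Q u - Q w + Q 0 = B u w)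
    {u : V} (hu : u ∈ LinearMap.ker B) (w : V) :
    Q (u + w) - Q 0 = (Q u - Q 0) + (Q w - Q 0) := by
  linear_combination (hB u w).trans (by rw [LinearMap.mem_ker.1 hu, LinearMap.zero_apply])

def polarKerHom (hB : ∀ u w, Q (u + w) - Q u - Q w + Q 0 = B u w) :
    LinearMap.ker B →+ κ where
  toFun u := Q u - Q 0
  map_zero' := sub_self _
  map_add' u w := apply_add_sub_apply_zero_of_mem_ker hB u.2 w

variable [Finite κ] [Fintype V] {ψ : AddChar κ ℂ}

open scoped Classical in
theorem sum_addChar_mul_conj (hψ : ψ ≠ 1) (hB : ∀ u w, Q (u + w) - Q u - Q w + Q 0 = B u w) :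
    (∑ v, ψ (Q v)) * starRingEnd ℂ (∑ v, ψ (Q v)) =
      Fintype.card V * ∑ u, ψ.compAddMonoidHom (polarKerHom hB) u := by
  have hshift : ∀ w u, Q (w + u) - Q w = B u w + (Q u - Q 0) := fun w u ↦ by
    rw [add_comm w u]
    linear_combination hB u w
  calc (∑ v, ψ (Q v)) * starRingEnd ℂ (∑ v, ψ (Q v))
      = ∑ w, ∑ u, ψ (Q (w + u) - Q w) := by
        simp only [map_sum, sum_mul_sum, ← AddChar.map_neg_eq_conj, ← AddChar.map_add_eq_mul,
          ← sub_eq_add_neg]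
        rw [sum_comm]
        exact sum_congr rfl fun w _ ↦ (Fintype.sum_equiv (Equiv.addLeft w) _ _ fun _ ↦ rfl).symm
    _ = ∑ u, ψ (Q u - Q 0) * ∑ w, ψ (B u w) := by
        rw [sum_comm]
        simp only [hshift, AddChar.map_add_eq_mul, mul_sum, mul_comm]
    _ = Fintype.card V * ∑ u, ψ.compAddMonoidHom (polarKerHom hB) u := by
        simp only [AddChar.sum_apply_linearMap hψ, mul_ite, mul_zero, mul_sum,
          AddChar.compAddMonoidHom_apply, polarKerHom, AddMonoidHom.coe_mk, ZeroHom.coe_mk]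
        rw [← sum_subtype _ (fun u ↦ mem_filter_univ (p := (· ∈ LinearMap.ker B)) u)
          (fun u ↦ (Fintype.card V : ℂ) * ψ (Q u - Q 0)), sum_filter]
        simp [mul_comm]

open scoped Classical in
theorem norm_sq_sum_addChar (hψ : ψ ≠ 1) (hB : ∀ u w, Q (u + w) - Q u - Q w + Q 0 = B u w) :
    ‖∑ v, ψ (Q v)‖ ^ 2 = if ψ.compAddMonoidHom (polarKerHom hB) = 0 then
      (Fintype.card V * Nat.card (LinearMap.ker B) : ℝ) else 0 := by
  have h := sum_addChar_mul_conj hψ hB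
  rw [Complex.mul_conj', AddChar.sum_eq_ite,
    ← Nat.card_eq_fintype_card (α := LinearMap.ker B)] at h
  split_ifs at h ⊢
  · exact_mod_cast h
  · exact_mod_cast h.trans (mul_zero _)

end PolarKernel

theorem gauss_sum_quadratic_general
    (κ : Type*) [Field κ] [Fintype κ]
    (V : Type*) [AddCommGroup V] [Module κ V] [Fintype V]
    (ψ : AddChar κ ℂ) (hψ : ψ ≠ 1)
    (Q : V → κ)
    (hQ : ∃ (Q₂ : QuadraticForm κ V) (L : V →ₗ[κ] κ) (c : κ), ∀ v, Q v = Q₂ v + L v + c)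
    (W : Set V) (hW : W = {v | ∀ w, Q (v + w) - Q v - Q w + Q 0 = 0}) :
    ((∀ v ∈ W, ψ (Q v - Q 0) = 1) →
        ‖∑ v : V, ψ (Q v)‖ =
          Real.sqrt ((Fintype.card V : ℝ) * (Nat.card W : ℝ))) ∧
    (¬ (∀ v ∈ W, ψ (Q v - Q 0) = 1) → ‖∑ v : V, ψ (Q v)‖ = 0) := by
  classical
  obtain ⟨Q₂, L, c, hQ⟩ := hQ
  have hB := QuadraticMap.apply_add_sub_sub_add_eq_polarBilin Q₂ L c hQ
  obtain rfl : W = LinearMap.ker Q₂.polarBilin := by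
    ext v
    simp [hW, hB, LinearMap.ext_iff]
  have htriv : (∀ v ∈ (LinearMap.ker Q₂.polarBilin : Set V), ψ (Q v - Q 0) = 1) ↔
      ψ.compAddMonoidHom (polarKerHom hB) = 0 := by
    simp [AddChar.eq_zero_iff, polarKerHom]
  have hnorm := norm_sq_sum_addChar hψ hB
  rw [htriv]
  refine ⟨fun h ↦ ?_, fun h ↦ ?_⟩
  · rw [if_pos h] at hnorm
    rw [← Real.sqrt_sq (norm_nonneg _), hnorm]
    rfl
  · rw [if_neg h] at hnorm
    exact pow_eq_zero_iff two_ne_zero |>.1 hnorm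

/-- Let `κ` be a finite field, `V` a finite-dimensional `κ`-vector space, `ψ` a nontrivial
additive character of `κ`, and `Q : V → κ` a polynomial function of degree at most `2`
(a quadratic form plus a linear form plus a constant). Let
`B(v,w) = Q(v+w) - Q v - Q w + Q 0` and `W` its kernel. Then `|∑_v ψ(Q v)|` equals
`|κ|^{(dim V + dim W)/2}` if `v ↦ ψ(Q v - Q 0)` is trivial on `W`, and `0` otherwise. -/
theorem gauss_sum_quadratic
    (κ : Type*) [Field κ] [Fintype κ]
    (V : Type*) [AddCommGroup V] [Module κ V] [FiniteDimensional κ V] [Fintype V]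
    (ψ : AddChar κ ℂ) (hψ : ψ ≠ 1)
    (Q : V → κ)
    (hQ : ∃ (Q₂ : QuadraticForm κ V) (L : V →ₗ[κ] κ) (c : κ), ∀ v, Q v = Q₂ v + L v + c)
    (W : Set V) (hW : W = {v | ∀ w, Q (v + w) - Q v - Q w + Q 0 = 0}) :
    ((∀ v ∈ W, ψ (Q v - Q 0) = 1) →
        ‖∑ v : V, ψ (Q v)‖ =
          Real.sqrt ((Fintype.card V : ℝ) * (Nat.card W : ℝ))) ∧
    (¬ (∀ v ∈ W, ψ (Q v - Q 0) = 1) → ‖∑ v : V, ψ (Q v)‖ = 0) :=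
  gauss_sum_quadratic_general κ V ψ hψ Q hQ W hW
end

section
/- Let V be a finite abelian group and φ: V → {z ∈ ℂ : |z|=1} a function such that, defining φ̃(v,w) = φ(v+w)·conj(φ(v))·conj(φ(w))·φ(0), the map w ↦ φ̃(v,w) is a group homomorphism V → ℂ^× for each v. Let W = {v ∈ V : φ̃(v,w)=1 for all w ∈ V}. Then |∑_{v∈V} φ(v)| = sqrt(|V|·|W|) if φ is constant on W, and |∑_{v∈V} φ(v)| = 0 otherwise. -/
/-!
Write `φ̃ = polarization φ` and `S = ∑ v, φ v`. Substituting `v = w + u` in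
`|S|² = ∑ v, ∑ w, φ v * conj (φ w)` and using `|φ| = 1` gives
`|S|² = ∑ u, φ u * conj (φ 0) * ∑ w, φ̃ u w`. For fixed `u` the inner sum is the sum of the
character `φ̃ u`, so it is `|V|` on the radical `W` and `0` off it. For `u, u' ∈ W` the identity
`φ̃ u u' = 1` says that `u ↦ φ u * conj (φ 0)` is a character of `W`, whose sum is `|W|` when it is
trivial, i.e. when `φ` is constant on `W`, and `0` otherwise.
-/

open ComplexConjugate

namespace Complex

theorem mul_conj_eq_one_iff {z : ℂ} (hz : ‖z‖ = 1) {w : ℂ} : w * conj z = 1 ↔ w = z := by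
  rw [← inv_eq_conj hz, mul_inv_eq_one₀ (norm_ne_zero_iff.mp (hz ▸ one_ne_zero))]

theorem mul_conj_self_of_norm_eq_one {z : ℂ} (hz : ‖z‖ = 1) : z * conj z = 1 :=
  (mul_conj_eq_one_iff hz).2 rfl

end Complex

open Complex

namespace GaussSum

variable {V : Type*} [AddCommGroup V]

def polarization (φ : V → ℂ) (v w : V) : ℂ := φ (v + w) * conj (φ v) * conj (φ w) * φ 0

variable {φ : V → ℂ}

theorem polarization_comm (φ : V → ℂ) (v w : V) : polarization φ v w = polarization φ w v := by
  unfold polarization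
  rw [add_comm]
  ring

theorem polarization_zero_right (hφ : ∀ v, ‖φ v‖ = 1) (v : V) : polarization φ v 0 = 1 := by
  have hv := mul_conj_self_of_norm_eq_one (hφ v)
  have h0 := mul_conj_self_of_norm_eq_one (hφ 0)
  unfold polarization
  rw [add_zero]
  linear_combination (φ 0 * conj (φ 0)) * hv + h0

theorem polarization_zero_left (hφ : ∀ v, ‖φ v‖ = 1) (w : V) : polarization φ 0 w = 1 := by
  rw [polarization_comm, polarization_zero_right hφ]

theorem mul_conj_map_add_of_polarization_eq_one (hφ : ∀ v, ‖φ v‖ = 1) {u u' : V}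
    (h : polarization φ u u' = 1) :
    φ (u + u') * conj (φ 0) = φ u * conj (φ 0) * (φ u' * conj (φ 0)) := by
  have hu := mul_conj_self_of_norm_eq_one (hφ u)
  have hu' := mul_conj_self_of_norm_eq_one (hφ u')
  have h0 := mul_conj_self_of_norm_eq_one (hφ 0)
  unfold polarization at h
  linear_combination (φ u * φ u' * conj (φ 0) * conj (φ 0)) * h
    - φ (u + u') * conj (φ 0) * (φ u' * conj (φ u') * (φ 0 * conj (φ 0))) * hu
    - φ (u + u') * conj (φ 0) * (φ 0 * conj (φ 0)) * hu' - φ (u + u') * conj (φ 0) * h0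

theorem sum_mul_conj_sum_eq_sum_polarization [Fintype V] (hφ : ∀ v, ‖φ v‖ = 1) :
    (∑ v, φ v) * conj (∑ v, φ v) = ∑ u, φ u * conj (φ 0) * ∑ w, polarization φ u w := by
  have hterm : ∀ u w, φ (w + u) * conj (φ w) = φ u * conj (φ 0) * polarization φ u w := by
    intro u w
    have hu := mul_conj_self_of_norm_eq_one (hφ u)
    have h0 := mul_conj_self_of_norm_eq_one (hφ 0)
    unfold polarization
    rw [add_comm]
    linear_combination (-(φ (u + w) * conj (φ w))) * (φ 0 * conj (φ 0)) * hu
      - φ (u + w) * conj (φ w) * h0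
  calc (∑ v, φ v) * conj (∑ v, φ v) = ∑ w, ∑ u, φ (w + u) * conj (φ w) := by
        rw [map_sum, Finset.sum_mul_sum, Finset.sum_comm]
        exact Finset.sum_congr rfl fun w _ =>
          (Equiv.sum_comp (Equiv.addLeft w) (fun v => φ v * conj (φ w))).symm
    _ = ∑ u, φ u * conj (φ 0) * ∑ w, polarization φ u w := by
        simp only [hterm, Finset.mul_sum]
        exact Finset.sum_comm

section Radical

variable (φ) (hφ : ∀ v, ‖φ v‖ = 1)
  (hhom : ∀ v w₁ w₂, polarization φ v (w₁ + w₂) = polarization φ v w₁ * polarization φ v w₂)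

def polarizationChar (v : V) : AddChar V ℂ where
  toFun := polarization φ v
  map_zero_eq_one' := polarization_zero_right hφ v
  map_add_eq_mul' := hhom v

def radical : AddSubgroup V where
  carrier := {v | ∀ w, polarization φ v w = 1}
  zero_mem' := polarization_zero_left hφ
  add_mem' {a b} ha hb w := by
    rw [polarization_comm, hhom, polarization_comm, ha, polarization_comm, hb, one_mul]
  neg_mem' {a} ha w := by
    have h := hhom w a (-a)
    rw [add_neg_cancel, polarization_zero_right hφ, polarization_comm φ w a, ha, one_mul] at h
    rw [polarization_comm, ← h]

theorem polarizationChar_eq_zero_iff {v : V} :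
    polarizationChar φ hφ hhom v = 0 ↔ v ∈ radical φ hφ hhom :=
  AddChar.eq_zero_iff

theorem sum_polarization [Fintype V] [DecidablePred (· ∈ radical φ hφ hhom)] (v : V) :
    ∑ w, polarization φ v w = if v ∈ radical φ hφ hhom then (Fintype.card V : ℂ) else 0 := by
  split_ifs with hv
  · simp [show ∀ w, polarization φ v w = 1 from hv]
  · exact AddChar.sum_eq_zero_iff_ne_zero.2 (mt (polarizationChar_eq_zero_iff φ hφ hhom).1 hv)

def radicalChar : AddChar (radical φ hφ hhom) ℂ where
  toFun u := φ u * conj (φ 0)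
  map_zero_eq_one' := mul_conj_self_of_norm_eq_one (hφ 0)
  map_add_eq_mul' u u' := mul_conj_map_add_of_polarization_eq_one hφ (u.2 u')

theorem radicalChar_eq_zero_iff : radicalChar φ hφ hhom = 0 ↔
    ∀ v ∈ radical φ hφ hhom, ∀ w ∈ radical φ hφ hhom, φ v = φ w := by
  rw [AddChar.eq_zero_iff]
  refine ⟨fun h v hv w hw => ?_, fun h u => (mul_conj_eq_one_iff (hφ 0)).2 (h u u.2 0 (zero_mem _))⟩
  rw [(mul_conj_eq_one_iff (hφ 0)).1 (h ⟨v, hv⟩), (mul_conj_eq_one_iff (hφ 0)).1 (h ⟨w, hw⟩)]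

theorem sum_mul_conj_sum_eq_card_mul_sum_radicalChar [Fintype V]
    [DecidablePred (· ∈ radical φ hφ hhom)] :
    (∑ v, φ v) * conj (∑ v, φ v) = Fintype.card V * ∑ u, radicalChar φ hφ hhom u := by
  rw [sum_mul_conj_sum_eq_sum_polarization hφ, Finset.mul_sum]
  simp only [sum_polarization φ hφ hhom, mul_ite, mul_zero]
  rw [← Finset.sum_filter, Finset.sum_subtype _ (fun _ => Finset.mem_filter_univ _)]
  exact Finset.sum_congr rfl fun u _ => mul_comm _ _

open Classical in
theorem norm_sum_sq [Fintype V] :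
    ‖∑ v, φ v‖ ^ 2 = if ∀ v ∈ radical φ hφ hhom, ∀ w ∈ radical φ hφ hhom, φ v = φ w
      then (Fintype.card V * Nat.card (radical φ hφ hhom) : ℝ) else 0 := by
  have h := sum_mul_conj_sum_eq_card_mul_sum_radicalChar φ hφ hhom
  rw [mul_conj', AddChar.sum_eq_ite] at h
  simp only [radicalChar_eq_zero_iff, Nat.card_eq_fintype_card] at h ⊢
  split_ifs at h ⊢
  · exact_mod_cast h
  · exact_mod_cast h.trans (mul_zero _)

end Radical

end GaussSum

open GaussSum

/-- Let `V` be a finite abelian group and `φ : V → ℂ` a unimodular function such that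
`φ̃(v,w) = φ(v+w)·conj(φ v)·conj(φ w)·φ 0` is a homomorphism in `w` for each `v`. Let
`W = {v : φ̃(v,w) = 1 for all w}`. Then `|∑ φ| = √(|V|·|W|)` if `φ` is constant on `W`,
and `|∑ φ| = 0` otherwise. -/
theorem gauss_sum_general
    (V : Type*) [AddCommGroup V] [Fintype V] (φ : V → ℂ)
    (hφ : ∀ v, ‖φ v‖ = 1)
    (φt : V → V → ℂ)
    (hφt : ∀ v w, φt v w = φ (v + w) * (starRingEnd ℂ) (φ v) * (starRingEnd ℂ) (φ w) * φ 0)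
    (hhom : ∀ v w₁ w₂, φt v (w₁ + w₂) = φt v w₁ * φt v w₂)
    (W : Set V) (hW : W = {v | ∀ w, φt v w = 1}) :
    ((∀ v ∈ W, ∀ w ∈ W, φ v = φ w) →
        ‖∑ v : V, φ v‖ = Real.sqrt ((Fintype.card V : ℝ) * (Nat.card W : ℝ))) ∧
    (¬ (∀ v ∈ W, ∀ w ∈ W, φ v = φ w) → ‖∑ v : V, φ v‖ = 0) := by
  obtain rfl : φt = polarization φ := funext fun v => funext fun w => hφt v w
  obtain rfl : W = radical φ hφ hhom := hW
  have h := norm_sum_sq φ hφ hhom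
  split_ifs at h with hconst
  · refine ⟨fun _ => ?_, fun hnconst => absurd hconst hnconst⟩
    rw [← Real.sqrt_sq (norm_nonneg _)]
    exact congrArg Real.sqrt h
  · exact ⟨fun hconst' => absurd hconst' hconst, fun _ => pow_eq_zero_iff two_ne_zero |>.1 h⟩
end

section
/- Let κ = 𝔽_q be a finite field of odd characteristic p, ψ a nontrivial additive character of κ, k ≥ 2 an integer divisible by p, and α, β ∈ κ with β ≠ 0. Define G_k(α,β) = ∑_{δ₁,...,δ_{k-1} ∈ κ} ψ(α·∑_i δ_i + β·∑_{1≤i≤j≤k-1} δ_i δ_j). Then |G_k(α,β)| = q^{k/2} if α = 0, and G_k(α,β) = 0 if α ≠ 0. -/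
/-!
The form `Q δ = ∑_{i ≤ j} δ_i δ_j` on `κ^{k-1}` polarizes as
`Q (δ + η) = Q δ + Q η + ∑_i δ_i (∑_j η_j + η_i)`. As `k = 0` in `κ` and `2` is invertible, the
constant vectors `c • 1` form the radical of `Q` and satisfy `Q (c • 1) = 0`. For `α ≠ 0`, shifting
`δ` by a constant vector leaves `Q` unchanged but multiplies the summand by `ψ (-α c)`, which is
not `1` for a suitable `c`, so the sum vanishes. For `α = 0`, expanding `|G|²` and summing the
polarization term over `δ` first leaves only the `q` constant vectors `η`, each contributing
`q^{k-1}`.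
-/

open Finset

section UpperTriangle

variable {R ι : Type*} [CommSemiring R] [Fintype ι] [LinearOrder ι]

def upperTriangleSum (δ ε : ι → R) : R :=
  ∑ q ∈ univ.filter (fun q : ι × ι => q.1 ≤ q.2), δ q.1 * ε q.2

lemma upperTriangleSum_eq_sum_ite (δ ε : ι → R) :
    upperTriangleSum δ ε = ∑ i, ∑ j, if i ≤ j then δ i * ε j else 0 := by
  rw [upperTriangleSum, sum_filter, Fintype.sum_prod_type]

lemma upperTriangleSum_add_swap (δ ε : ι → R) :
    upperTriangleSum δ ε + upperTriangleSum ε δ = (∑ i, δ i) * (∑ i, ε i) + δ ⬝ᵥ ε := by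
  have hswap : upperTriangleSum ε δ = ∑ i, ∑ j, if j ≤ i then δ i * ε j else 0 := by
    rw [upperTriangleSum_eq_sum_ite, sum_comm]
    simp only [mul_comm]
  have hdiag : δ ⬝ᵥ ε = ∑ i, ∑ j, if i = j then δ i * ε j else 0 := by
    simp [dotProduct]
  rw [hswap, hdiag, upperTriangleSum_eq_sum_ite, sum_mul_sum]
  simp only [← sum_add_distrib]
  refine sum_congr rfl fun i _ => sum_congr rfl fun j _ => ?_
  rcases lt_trichotomy i j with h | rfl | h
  · simp [h.le, h.not_ge, h.ne]
  · simp
  · simp [h.le, h.not_ge, h.ne']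

lemma upperTriangleSum_add_add (δ η : ι → R) :
    upperTriangleSum (δ + η) (δ + η) = upperTriangleSum δ δ + upperTriangleSum η η
      + δ ⬝ᵥ fun i => ∑ j, η j + η i := by
  have hcross : (δ ⬝ᵥ fun i => ∑ j, η j + η i) = (∑ i, δ i) * (∑ i, η i) + δ ⬝ᵥ η := by
    simp only [dotProduct, mul_add, sum_add_distrib, ← sum_mul]
  rw [hcross, ← upperTriangleSum_add_swap]
  simp only [upperTriangleSum, Pi.add_apply, ← sum_add_distrib]
  exact sum_congr rfl fun _ _ => by ring

end UpperTriangle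

lemma sum_add_eq_zero_iff_mem_range_const {R ι : Type*} [CommRing R] [Fintype ι]
    (hcard : (Fintype.card ι + 1 : R) = 0) (η : ι → R) :
    (fun i => ∑ j, η j + η i) = 0 ↔ η ∈ Set.range (Function.const ι) := by
  constructor
  · intro h
    exact ⟨-∑ j, η j, funext fun i => (eq_neg_of_add_eq_zero_right (congrFun h i)).symm⟩
  · rintro ⟨c, rfl⟩
    funext i
    simp only [Function.const_apply, sum_const, card_univ, nsmul_eq_mul, Pi.zero_apply]
    linear_combination c * hcard

section ConstantShift

variable {R ι : Type*} [CommRing R] [NoZeroDivisors R] [Fintype ι] [LinearOrder ι]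

lemma upperTriangleSum_const (hcard : (Fintype.card ι + 1 : R) = 0) (h2 : (2 : R) ≠ 0) (c : R) :
    upperTriangleSum (Function.const ι c) (Function.const ι c) = 0 := by
  have h := upperTriangleSum_add_swap (Function.const ι c) (Function.const ι c)
  simp only [Function.const_apply, dotProduct, sum_const, card_univ, nsmul_eq_mul] at h
  refine (mul_eq_zero.mp (?_ : 2 * upperTriangleSum (Function.const ι c) _ = 0)).resolve_left h2
  linear_combination h + Fintype.card ι * c ^ 2 * hcard

lemma upperTriangleSum_add_const (hcard : (Fintype.card ι + 1 : R) = 0) (h2 : (2 : R) ≠ 0)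
    (δ : ι → R) (c : R) :
    upperTriangleSum (δ + Function.const ι c) (δ + Function.const ι c) = upperTriangleSum δ δ := by
  rw [upperTriangleSum_add_add, upperTriangleSum_const hcard h2]
  simp only [Function.const_apply, dotProduct, sum_const, card_univ, nsmul_eq_mul, ← sum_mul]
  linear_combination c * (∑ i, δ i) * hcard

end ConstantShift

lemma AddChar.map_sum_eq_prod {A M ι : Type*} [AddCommMonoid A] [CommMonoid M] (ψ : AddChar A M)
    (s : Finset ι) (f : ι → A) : ψ (∑ i ∈ s, f i) = ∏ i ∈ s, ψ (f i) :=
  map_prod ψ.toMonoidHom (fun i => Multiplicative.ofAdd (f i)) s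

lemma sum_eq_zero_of_shift_eq_mul {V M : Type*} [AddGroup V] [Fintype V] [CommRing M]
    [NoZeroDivisors M]
    (f : V → M) (c : V) {z : M} (hz : z ≠ 1) (hf : ∀ x, f (x + c) = z * f x) : ∑ x, f x = 0 := by
  have hshift : z * ∑ x, f x = ∑ x, f x := by
    rw [mul_sum]
    exact Fintype.sum_equiv (Equiv.addRight c) _ _ fun x => (hf x).symm
  exact (mul_eq_zero.mp (by linear_combination hshift : (z - 1) * ∑ x, f x = 0)).resolve_left
    (sub_ne_zero.mpr hz)

lemma AddChar.sum_dotProduct {R R' ι : Type*} [CommRing R] [Fintype R] [DecidableEq R]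
    [CommRing R'] [IsDomain R'] [Fintype ι] [DecidableEq ι] {ψ : AddChar R R'}
    (hψ : ψ.IsPrimitive) (a : ι → R) :
    ∑ x : ι → R, ψ (x ⬝ᵥ a) = if a = 0 then (Fintype.card R : R') ^ Fintype.card ι else 0 := by
  calc ∑ x : ι → R, ψ (x ⬝ᵥ a) = ∏ i, ∑ t : R, ψ (t * a i) := by
        simp only [dotProduct, AddChar.map_sum_eq_prod, Fintype.prod_sum]
    _ = ∏ i, if a i = 0 then (Fintype.card R : R') else 0 := by
        simp only [AddChar.sum_mulShift _ hψ, Nat.cast_ite, Nat.cast_zero]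
    _ = _ := by simp only [Fintype.prod_ite_zero, prod_const, card_univ, funext_iff, Pi.zero_apply]

lemma sq_norm_sum_addChar_eq {V A : Type*} [AddCommGroup V] [Fintype V] [AddCommGroup A] [Finite A]
    (ψ : AddChar A ℂ) (Q : V → A) (B : V → V → A) (hQ : ∀ x y, Q (x + y) = Q x + Q y + B x y) :
    ((‖∑ x, ψ (Q x)‖ ^ 2 : ℝ) : ℂ) = ∑ y, ψ (Q y) * ∑ x, ψ (B x y) := by
  calc ((‖∑ x, ψ (Q x)‖ ^ 2 : ℝ) : ℂ)
      = ∑ x, ∑ y, ψ (Q (x + y)) * starRingEnd ℂ (ψ (Q x)) := by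
        rw [Complex.ofReal_pow, ← Complex.mul_conj', map_sum, sum_mul_sum, sum_comm]
        exact sum_congr rfl fun x _ =>
          Fintype.sum_equiv (Equiv.addLeft x).symm _ _ fun z => by simp
    _ = ∑ x, ∑ y, ψ (Q y) * ψ (B x y) := by
        refine sum_congr rfl fun x _ => sum_congr rfl fun y _ => ?_
        rw [← AddChar.map_neg_eq_conj, ← AddChar.map_add_eq_mul, ← AddChar.map_add_eq_mul, hQ]
        congr 1
        abel
    _ = ∑ y, ψ (Q y) * ∑ x, ψ (B x y) := by
        simp only [mul_sum]
        exact sum_comm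

section GaussSum

variable {κ ι : Type*} [Field κ] [Fintype κ] [Fintype ι] [LinearOrder ι] {ψ : AddChar κ ℂ}

lemma sq_norm_sum_addChar_upperTriangleSum (hψ : ψ.IsPrimitive)
    (hcard : (Fintype.card ι + 1 : κ) = 0) (h2 : (2 : κ) ≠ 0) {β : κ} (hβ : β ≠ 0) :
    ‖∑ δ : ι → κ, ψ (β * upperTriangleSum δ δ)‖ ^ 2 =
      (Fintype.card κ : ℝ) ^ (Fintype.card ι + 1) := by
  classical
  have : Nonempty ι := by
    by_contra h
    simp [not_nonempty_iff.mp h] at hcard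
  have hpolar : ∀ x y : ι → κ, β * upperTriangleSum (x + y) (x + y) =
      β * upperTriangleSum x x + β * upperTriangleSum y y + x ⬝ᵥ β • fun i => ∑ j, y j + y i := by
    intro x y
    rw [upperTriangleSum_add_add, dotProduct_smul, smul_eq_mul]
    ring
  have hconst : univ.filter (· ∈ Set.range (Function.const ι)) =
      univ.image (Function.const ι (α := κ)) := by
    ext; simp
  apply Complex.ofReal_injective
  rw [sq_norm_sum_addChar_eq ψ (fun δ => β * upperTriangleSum δ δ) _ hpolar]
  simp only [AddChar.sum_dotProduct hψ, smul_eq_zero, hβ, false_or,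
    sum_add_eq_zero_iff_mem_range_const hcard, mul_ite, mul_zero]
  rw [← sum_filter, hconst, sum_image (Function.const_injective (α := ι)).injOn]
  simp only [upperTriangleSum_const hcard h2, mul_zero, AddChar.map_zero_eq_one, one_mul, sum_const,
    card_univ, nsmul_eq_mul]
  push_cast
  ring

lemma sum_addChar_linear_add_upperTriangleSum (hψ : ψ.IsPrimitive)
    (hcard : (Fintype.card ι + 1 : κ) = 0) (h2 : (2 : κ) ≠ 0) {α : κ} (hα : α ≠ 0) (β : κ) :
    ∑ δ : ι → κ, ψ (α * ∑ i, δ i + β * upperTriangleSum δ δ) = 0 := by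
  obtain ⟨t, ht⟩ := AddChar.ne_one_iff.mp (hψ (neg_ne_zero.mpr hα))
  refine sum_eq_zero_of_shift_eq_mul _ (Function.const ι t) ht fun δ => ?_
  rw [AddChar.mulShift_apply, ← AddChar.map_add_eq_mul, upperTriangleSum_add_const hcard h2]
  congr 1
  simp only [Pi.add_apply, Function.const_apply, sum_add_distrib, sum_const, card_univ,
    nsmul_eq_mul]
  linear_combination α * t * hcard

end GaussSum

open Finset in
theorem gauss_sum_of_dvd_odd_char_general
    (κ : Type*) [Field κ] [Fintype κ] (p : ℕ) [CharP κ p] (hodd : p ≠ 2)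
    (ψ : AddChar κ ℂ) (hψ : ψ ≠ 1) (k : ℕ) (hk : 2 ≤ k) (hpk : p ∣ k)
    (α β : κ) (hβ : β ≠ 0) :
    (α = 0 → ‖(∑ δ : Fin (k - 1) → κ,
        ψ (α * ∑ i, δ i +
          β * ∑ q ∈ univ.filter (fun q : Fin (k-1) × Fin (k-1) => q.1 ≤ q.2),
              δ q.1 * δ q.2))‖ = Real.sqrt ((Fintype.card κ : ℝ) ^ k)) ∧
    (α ≠ 0 → (∑ δ : Fin (k - 1) → κ,
        ψ (α * ∑ i, δ i +
          β * ∑ q ∈ univ.filter (fun q : Fin (k-1) × Fin (k-1) => q.1 ≤ q.2),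
              δ q.1 * δ q.2)) = 0) := by
  have hk1 : k - 1 + 1 = k := by omega
  have hcard : (Fintype.card (Fin (k - 1)) + 1 : κ) = 0 := by
    rw [Fintype.card_fin, ← Nat.cast_add_one, hk1, CharP.cast_eq_zero_iff κ p]
    exact hpk
  have h2 : (2 : κ) ≠ 0 := Ring.two_ne_zero (by rwa [ringChar.eq κ p])
  have hprim := AddChar.IsPrimitive.of_ne_one hψ
  refine ⟨fun hα => ?_, fun hα => sum_addChar_linear_add_upperTriangleSum hprim hcard h2 hα β⟩
  subst hα
  have h := sq_norm_sum_addChar_upperTriangleSum hprim hcard h2 hβ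
  rw [Fintype.card_fin, hk1] at h
  simp only [zero_mul, zero_add]
  rw [← h, Real.sqrt_sq (norm_nonneg _)]
  rfl

open Finset in
/-- For a finite field `κ` of odd characteristic `p` with `p ∣ k`, a nontrivial additive
character `ψ` and `β ≠ 0`, the Gauss sum `G_k(α,β)` has absolute value `q^{k/2}` when `α = 0`
and vanishes when `α ≠ 0`. -/
theorem gauss_sum_of_dvd_odd_char
    (κ : Type*) [Field κ] [Fintype κ] (p : ℕ) [CharP κ p] (hp : p.Prime) (hodd : p ≠ 2)
    (ψ : AddChar κ ℂ) (hψ : ψ ≠ 1) (k : ℕ) (hk : 2 ≤ k) (hpk : p ∣ k)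
    (α β : κ) (hβ : β ≠ 0) :
    (α = 0 → ‖(∑ δ : Fin (k - 1) → κ,
        ψ (α * ∑ i, δ i +
          β * ∑ q ∈ univ.filter (fun q : Fin (k-1) × Fin (k-1) => q.1 ≤ q.2),
              δ q.1 * δ q.2))‖ = Real.sqrt ((Fintype.card κ : ℝ) ^ k)) ∧
    (α ≠ 0 → (∑ δ : Fin (k - 1) → κ,
        ψ (α * ∑ i, δ i +
          β * ∑ q ∈ univ.filter (fun q : Fin (k-1) × Fin (k-1) => q.1 ≤ q.2),
              δ q.1 * δ q.2)) = 0) :=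
  gauss_sum_of_dvd_odd_char_general κ p hodd ψ hψ k hk hpk α β hβ
end

section
/- Let R be a discrete valuation ring with uniformizer π of residue characteristic p, k ≥ 2 with v = v_p(k), n ≥ 2, and c = min{s ∈ ℕ : π^{(p^r+1)s} p^{v-r} ≡ 0 mod π^n for all r ∈ ℕ, r ≤ v}. Then for all a ∈ R^× and y₁, y₂ ∈ π^c R, (a+y₁+y₂)^{1-k} - (a+y₁)^{1-k} - (a+y₂)^{1-k} + a^{1-k} ≡ 0 mod π^n. -/
/-!
For `z ∈ π^c R` put `e(z) = (1 + z)^{-k} - 1`. By the binomial theorem and induction on `v`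
(using `(x + y)^p = x^p + y^p + p x y r`), `(1 + t)^{p^v} - 1` lies in the ideal generated by the
`p^{v-r} t^{p^r}`, `r ≤ v`, and hence so do `(1 + t)^k - 1` and `e(t)`. The defining property of
`c` says precisely that `π^c` times this ideal lies in `π^n R` when `t ∈ π^c R`. Factoring
`1 + x₁ + x₂ = (1 + x₁)(1 + x₂)(1 + δ)` with `δ = -x₁x₂/((1 + x₁)(1 + x₂))` then shows that `e` is
additive modulo `π^n`, and `(1 + z)^{1-k} = (1 + z)(1 + e(z))` turns this into the claim for
`a = 1`; the general case follows by scaling with `a⁻¹`.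
-/

section

open scoped Ring

variable {R : Type*} [CommRing R] {p : ℕ}

variable (p) in
def frobeniusIdeal (v : ℕ) (t : R) : Ideal R :=
  Ideal.span ((fun r => (p : R) ^ (v - r) * t ^ p ^ r) '' Set.Iic v)

lemma frobeniusIdeal_le_iff {v : ℕ} {t : R} {J : Ideal R} :
    frobeniusIdeal p v t ≤ J ↔ ∀ r ≤ v, (p : R) ^ (v - r) * t ^ p ^ r ∈ J := by
  simp [frobeniusIdeal, Ideal.span_le, Set.subset_def]

lemma natCast_pow_mul_mem_frobeniusIdeal {v r : ℕ} (t : R) (hr : r ≤ v) :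
    (p : R) ^ (v - r) * t ^ p ^ r ∈ frobeniusIdeal p v t :=
  Ideal.subset_span ⟨r, hr, rfl⟩

lemma mul_mem_of_mem_frobeniusIdeal {v : ℕ} {t x e : R} {J : Ideal R}
    (h : ∀ r ≤ v, x * ((p : R) ^ (v - r) * t ^ p ^ r) ∈ J) (he : e ∈ frobeniusIdeal p v t) :
    x * e ∈ J := by
  have hle : frobeniusIdeal p v t ≤ J.colon {x} := frobeniusIdeal_le_iff.2 fun r hr =>
    Submodule.mem_colon_singleton.2 (by rw [smul_eq_mul, mul_comm]; exact h r hr)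
  simpa only [mul_comm x, smul_eq_mul] using Submodule.mem_colon_singleton.1 (hle he)

lemma natCast_mul_mem_frobeniusIdeal_succ {v : ℕ} {t e : R} (he : e ∈ frobeniusIdeal p v t) :
    (p : R) * e ∈ frobeniusIdeal p (v + 1) t := by
  refine mul_mem_of_mem_frobeniusIdeal (fun r hr => ?_) he
  rw [← mul_assoc, ← pow_succ', show v - r + 1 = v + 1 - r by omega]
  exact natCast_pow_mul_mem_frobeniusIdeal t (by omega)

lemma pow_mem_frobeniusIdeal_succ (hp : p.Prime) {v : ℕ} {t e : R}
    (he : e ∈ frobeniusIdeal p v t) : e ^ p ∈ frobeniusIdeal p (v + 1) t := by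
  induction he using Submodule.span_induction with
  | mem x hx =>
    obtain ⟨r, hr, rfl⟩ := hx
    have hpow : ((p : R) ^ (v - r) * t ^ p ^ r) ^ p
        = (p : R) ^ ((v - r) * (p - 1)) * ((p : R) ^ (v + 1 - (r + 1)) * t ^ p ^ (r + 1)) := by
      rw [Nat.add_sub_add_right, mul_pow, ← pow_mul, ← pow_mul, ← pow_succ, ← mul_assoc,
        ← pow_add, ← Nat.mul_add_one, Nat.sub_add_cancel hp.one_le]
    rw [hpow]
    exact Ideal.mul_mem_left _ _ (natCast_pow_mul_mem_frobeniusIdeal t (by simpa using hr))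
  | zero => rw [zero_pow hp.ne_zero]; exact zero_mem _
  | add x y hx _ hxp hyp =>
    obtain ⟨s, hs⟩ := exists_add_pow_prime_eq hp x y
    rw [hs]
    exact add_mem (add_mem hxp hyp)
      (Ideal.mul_mem_right _ _ (Ideal.mul_mem_right _ _ (natCast_mul_mem_frobeniusIdeal_succ hx)))
  | smul a x _ hx => rw [smul_eq_mul, mul_pow]; exact Ideal.mul_mem_left _ _ hx

lemma one_add_pow_prime_pow_sub_one_mem_frobeniusIdeal (hp : p.Prime) (t : R) :
    ∀ v, (1 + t) ^ p ^ v - 1 ∈ frobeniusIdeal p v t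
  | 0 => by simpa using natCast_pow_mul_mem_frobeniusIdeal (p := p) (v := 0) t le_rfl
  | v + 1 => by
    obtain ⟨s, hs⟩ := exists_add_pow_prime_eq hp ((1 + t) ^ p ^ v - 1) 1
    rw [sub_add_cancel, ← pow_mul, ← pow_succ, one_pow, mul_one] at hs
    rw [hs, add_right_comm, add_sub_cancel_right]
    have ih := one_add_pow_prime_pow_sub_one_mem_frobeniusIdeal hp t v
    exact add_mem (pow_mem_frobeniusIdeal_succ hp ih)
      (Ideal.mul_mem_right _ _ (natCast_mul_mem_frobeniusIdeal_succ ih))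

lemma one_add_pow_sub_one_mem_frobeniusIdeal (hp : p.Prime) {v k : ℕ} (hk : p ^ v ∣ k) (t : R) :
    (1 + t) ^ k - 1 ∈ frobeniusIdeal p v t := by
  obtain ⟨q, rfl⟩ := hk
  obtain ⟨s, hs⟩ := sub_one_dvd_pow_sub_one ((1 + t) ^ p ^ v) q
  rw [pow_mul, hs]
  exact Ideal.mul_mem_right _ _ (one_add_pow_prime_pow_sub_one_mem_frobeniusIdeal hp t v)

lemma inverse_one_add_pow_sub_one_mem_frobeniusIdeal (hp : p.Prime) {v k : ℕ} (hk : p ^ v ∣ k)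
    {t : R} (ht : IsUnit (1 + t)) : (1 + t)⁻¹ʳ ^ k - 1 ∈ frobeniusIdeal p v t := by
  have hinv : (1 + t)⁻¹ʳ ^ k * (1 + t) ^ k = 1 := by
    rw [← mul_pow, Ring.inverse_mul_cancel _ ht, one_pow]
  rw [show (1 + t)⁻¹ʳ ^ k - 1 = -(1 + t)⁻¹ʳ ^ k * ((1 + t) ^ k - 1) by linear_combination hinv]
  exact Ideal.mul_mem_left _ _ (one_add_pow_sub_one_mem_frobeniusIdeal hp hk t)

lemma frobeniusIdeal_le_of_mem (hp : p ≠ 0) {v : ℕ} {t : R} {I : Ideal R} (ht : t ∈ I) :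
    frobeniusIdeal p v t ≤ I :=
  frobeniusIdeal_le_iff.2 fun r _ =>
    Ideal.mul_mem_left _ _ (Ideal.pow_mem_of_mem _ ht _ (pow_pos (Nat.pos_of_ne_zero hp) r))

lemma frobeniusIdeal_mul_le (hp : p ≠ 0) {v : ℕ} {x t : R} {J : Ideal R}
    (h : ∀ r ≤ v, x * ((p : R) ^ (v - r) * t ^ p ^ r) ∈ J) : frobeniusIdeal p v (x * t) ≤ J := by
  refine frobeniusIdeal_le_iff.2 fun r hr => ?_
  have hpr : p ^ r = p ^ r - 1 + 1 :=
    (Nat.sub_add_cancel (Nat.one_le_pow _ _ (Nat.pos_of_ne_zero hp))).symm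
  rw [mul_pow, hpr, pow_succ, ← hpr]
  convert Ideal.mul_mem_left J (x ^ (p ^ r - 1)) (h r hr) using 1
  ring

lemma inverse_pow_pred_eq {u : R} (hu : IsUnit u) {k : ℕ} (hk : k ≠ 0) :
    u⁻¹ʳ ^ (k - 1) = u * u⁻¹ʳ ^ k := by
  obtain ⟨m, rfl⟩ := Nat.exists_eq_add_one_of_ne_zero hk
  rw [Nat.add_sub_cancel, pow_succ, mul_left_comm, Ring.mul_inverse_cancel _ hu, mul_one]

lemma inverse_one_add_add_eq {x₁ x₂ : R} (h₁ : IsUnit (1 + x₁)) (h₂ : IsUnit (1 + x₂)) :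
    (1 + (x₁ + x₂))⁻¹ʳ
      = (1 + x₁)⁻¹ʳ * (1 + x₂)⁻¹ʳ * (1 + x₁ * -(x₂ * (1 + x₁)⁻¹ʳ * (1 + x₂)⁻¹ʳ))⁻¹ʳ := by
  have hfactor : 1 + (x₁ + x₂)
      = (1 + x₁) * (1 + x₂) * (1 + x₁ * -(x₂ * (1 + x₁)⁻¹ʳ * (1 + x₂)⁻¹ʳ)) := by
    linear_combination (x₁ * x₂ * ((1 + x₂) * (1 + x₂)⁻¹ʳ)) * Ring.mul_inverse_cancel _ h₁
      + (x₁ * x₂) * Ring.mul_inverse_cancel _ h₂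
  rw [hfactor, Ring.mul_inverse_rev, Ring.mul_inverse_rev]
  ring

variable {v k : ℕ} {I M : Ideal R}

lemma inverse_one_add_pow_second_difference_mem (hp : p.Prime) (hk : p ^ v ∣ k) (hk₀ : k ≠ 0)
    (hI : I ≤ Ideal.jacobson ⊥)
    (hIM : ∀ x ∈ I, ∀ t ∈ I, ∀ r ≤ v, x * ((p : R) ^ (v - r) * t ^ p ^ r) ∈ M)
    {x₁ x₂ : R} (hx₁ : x₁ ∈ I) (hx₂ : x₂ ∈ I) :
    (1 + (x₁ + x₂))⁻¹ʳ ^ (k - 1) - (1 + x₁)⁻¹ʳ ^ (k - 1) - (1 + x₂)⁻¹ʳ ^ (k - 1) + 1 ∈ M := by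
  have hunit : ∀ x ∈ I, IsUnit (1 + x) := fun x hx =>
    Ideal.isUnit_of_sub_one_mem_jacobson_bot _ (by simpa using hI hx)
  set e : R → R := fun z => (1 + z)⁻¹ʳ ^ k - 1 with he_def
  have he : ∀ z ∈ I, e z ∈ frobeniusIdeal p v z := fun z hz =>
    inverse_one_add_pow_sub_one_mem_frobeniusIdeal hp hk (hunit z hz)
  have hxe : ∀ x ∈ I, ∀ z ∈ I, x * e z ∈ M := fun x hx z hz =>
    mul_mem_of_mem_frobeniusIdeal (hIM x hx z hz) (he z hz)
  have hsplit : ∀ z ∈ I, (1 + z)⁻¹ʳ ^ (k - 1) = (1 + z) * (1 + e z) := fun z hz => by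
    rw [he_def, add_sub_cancel]
    exact inverse_pow_pred_eq (hunit z hz) hk₀
  set t := -(x₂ * (1 + x₁)⁻¹ʳ * (1 + x₂)⁻¹ʳ)
  have ht : t ∈ I := neg_mem (I.mul_mem_right _ (I.mul_mem_right _ hx₂))
  have hmul : 1 + e (x₁ + x₂) = (1 + e x₁) * (1 + e x₂) * (1 + e (x₁ * t)) := by
    have hone_add : ∀ z, 1 + e z = (1 + z)⁻¹ʳ ^ k := fun z => add_sub_cancel 1 _
    rw [hone_add, hone_add, hone_add, hone_add, ← mul_pow, ← mul_pow,
      inverse_one_add_add_eq (hunit x₁ hx₁) (hunit x₂ hx₂)]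
  -- the correction factor `1 + x₁ * t` is quadratically close to `1`
  have hδ : e (x₁ * t) ∈ M :=
    frobeniusIdeal_mul_le hp.ne_zero (hIM x₁ hx₁ t ht) (he _ (I.mul_mem_right t hx₁))
  have hx₁₂ : x₁ + x₂ ∈ I := add_mem hx₁ hx₂
  rw [hsplit _ hx₁, hsplit _ hx₂, hsplit _ hx₁₂]
  have key : (1 + (x₁ + x₂)) * (1 + e (x₁ + x₂)) - (1 + x₁) * (1 + e x₁)
        - (1 + x₂) * (1 + e x₂) + 1
      = e x₂ * e x₁ + e (x₁ * t) * ((1 + e x₁) * (1 + e x₂))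
        + (x₁ * e (x₁ + x₂) - x₁ * e x₁) + (x₂ * e (x₁ + x₂) - x₂ * e x₂) := by
    linear_combination hmul
  rw [key]
  refine add_mem (add_mem (add_mem ?_ (M.mul_mem_right _ hδ)) ?_) ?_
  · exact hxe _ (frobeniusIdeal_le_of_mem hp.ne_zero hx₂ (he x₂ hx₂)) _ hx₁
  · exact sub_mem (hxe _ hx₁ _ hx₁₂) (hxe _ hx₁ _ hx₁)
  · exact sub_mem (hxe _ hx₂ _ hx₁₂) (hxe _ hx₂ _ hx₂)

lemma inverse_add_pow_second_difference_mem (hp : p.Prime) (hk : p ^ v ∣ k) (hk₀ : k ≠ 0)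
    (hI : I ≤ Ideal.jacobson ⊥)
    (hIM : ∀ x ∈ I, ∀ t ∈ I, ∀ r ≤ v, x * ((p : R) ^ (v - r) * t ^ p ^ r) ∈ M)
    (a : Rˣ) {y₁ y₂ : R} (hy₁ : y₁ ∈ I) (hy₂ : y₂ ∈ I) :
    ((a + y₁ + y₂) ^ (k - 1))⁻¹ʳ - ((a + y₁) ^ (k - 1))⁻¹ʳ - ((a + y₂) ^ (k - 1))⁻¹ʳ
      + ((a : R) ^ (k - 1))⁻¹ʳ ∈ M := by
  have hscale : ∀ y : R, ((a : R) + y)⁻¹ʳ = ↑a⁻¹ * (1 + ↑a⁻¹ * y)⁻¹ʳ := fun y => by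
    have : (a : R) + y = a * (1 + ↑a⁻¹ * y) := by rw [mul_one_add, a.mul_inv_cancel_left]
    rw [this, Ring.mul_inverse_rev, Ring.inverse_unit, mul_comm]
  have h := M.mul_mem_left (↑a⁻¹ ^ (k - 1)) (inverse_one_add_pow_second_difference_mem hp hk
    hk₀ hI hIM (I.mul_mem_left ↑a⁻¹ hy₁) (I.mul_mem_left ↑a⁻¹ hy₂))
  rw [← mul_add] at h
  simp only [← Ring.inverse_pow, add_assoc, hscale, Ring.inverse_unit]
  convert h using 1
  ring

end

theorem homomorphism_equation_general
    (R : Type*) [CommRing R] [IsDomain R] [IsDiscreteValuationRing R]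
    (π : R) (hπ : Irreducible π) (p : ℕ) (hp : p.Prime)
    (k : ℕ) (hk : 2 ≤ k) (v : ℕ) (hv : v = padicValNat p k) (n : ℕ) (hn : 2 ≤ n)
    (c : ℕ)
    (hc : c = sInf {s : ℕ | ∀ r ≤ v, π ^ n ∣ π ^ ((p ^ r + 1) * s) * (p : R) ^ (v - r)})
    (a : Rˣ) (y₁ y₂ : R)
    (hy₁ : y₁ ∈ Ideal.span {π} ^ c) (hy₂ : y₂ ∈ Ideal.span {π} ^ c) :
    Ring.inverse ((↑a + y₁ + y₂) ^ (k - 1)) - Ring.inverse ((↑a + y₁) ^ (k - 1))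
      - Ring.inverse ((↑a + y₂) ^ (k - 1)) + Ring.inverse ((a : R) ^ (k - 1))
      ∈ Ideal.span {π} ^ n := by
  have hcond : c ∈ {s : ℕ | ∀ r ≤ v, π ^ n ∣ π ^ ((p ^ r + 1) * s) * (p : R) ^ (v - r)} :=
    hc ▸ Nat.sInf_mem ⟨n, fun r _ => dvd_mul_of_dvd_left
      (pow_dvd_pow π (Nat.le_mul_of_pos_left n (by positivity))) _⟩
  have hc₀ : c ≠ 0 := by
    rintro rfl
    have h := hcond v le_rfl
    rw [mul_zero, pow_zero, Nat.sub_self, pow_zero, one_mul] at h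
    exact hπ.not_isUnit (isUnit_of_dvd_one ((dvd_pow_self π (by omega)).trans h))
  refine inverse_add_pow_second_difference_mem hp (hv ▸ pow_padicValNat_dvd) (by omega) ?_ ?_ a
    hy₁ hy₂
  · rw [← hπ.maximalIdeal_eq]
    exact (Ideal.pow_le_self hc₀).trans (IsLocalRing.maximalIdeal_le_jacobson ⊥)
  · intro x hx t ht r hr
    rw [Ideal.span_singleton_pow, Ideal.mem_span_singleton] at hx ht ⊢
    obtain ⟨x, rfl⟩ := hx
    obtain ⟨t, rfl⟩ := ht
    exact (hcond r hr).trans ⟨x * t ^ p ^ r, by ring⟩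

/-- Let `R` be a discrete valuation ring with uniformizer `π` and residue characteristic `p`,
`k ≥ 2` with `v = v_p(k)`, `n ≥ 2`, and
`c = min {s : π^{(p^r+1)s} p^{v-r} ≡ 0 mod π^n for all r ≤ v}`. Then for every unit `a` and
`y₁, y₂ ∈ π^c R`, `(a+y₁+y₂)^{1-k} - (a+y₁)^{1-k} - (a+y₂)^{1-k} + a^{1-k} ≡ 0 mod π^n`. -/
theorem homomorphism_equation
    (R : Type*) [CommRing R] [IsDomain R] [IsDiscreteValuationRing R]
    (π : R) (hπ : Irreducible π) (p : ℕ) (hp : p.Prime)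
    [CharP (R ⧸ Ideal.span {π}) p]
    (k : ℕ) (hk : 2 ≤ k) (v : ℕ) (hv : v = padicValNat p k) (n : ℕ) (hn : 2 ≤ n)
    (c : ℕ)
    (hc : c = sInf {s : ℕ | ∀ r ≤ v, π ^ n ∣ π ^ ((p ^ r + 1) * s) * (p : R) ^ (v - r)})
    (a : Rˣ) (y₁ y₂ : R)
    (hy₁ : y₁ ∈ Ideal.span {π} ^ c) (hy₂ : y₂ ∈ Ideal.span {π} ^ c) :
    Ring.inverse ((↑a + y₁ + y₂) ^ (k - 1)) - Ring.inverse ((↑a + y₁) ^ (k - 1))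
      - Ring.inverse ((↑a + y₂) ^ (k - 1)) + Ring.inverse ((a : R) ^ (k - 1))
      ∈ Ideal.span {π} ^ n :=
  homomorphism_equation_general R π hπ p hp k hk v hv n hn c hc a y₁ y₂ hy₁ hy₂
end

section
/- Let R be a discrete valuation ring with uniformizer π of residue characteristic p, k ≥ 2 with v = v_p(k), n ≥ 2, and c defined as min{s : π^{(p^r+1)s} p^{v-r} ≡ 0 mod π^n for all 0 ≤ r ≤ v}. Then for every a ∈ R/π^n R and z ∈ π^c R, a^k ≡ (a+z)^k mod π^{⌈n/2⌉}. -/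
/-!
Expand `(a + z)^k - a^k = ∑_{i ≥ 1} binom(k, i) z^i a^(k-i)`. For the `i`-th term put
`r = min(v, v_p(i))`, so that `p^r ≤ i` and `p^(v-r) ∣ binom(k, i)` (because `p^v ∣ k` divides
`i · binom(k, i) = k · binom(k-1, i-1)`). The term is then divisible by `y = π^(ic) p^(v-r)`, and
since `2i ≥ p^r + 1`, the defining property of `c` gives `π^n ∣ y^2`; in a discrete valuation ring
this forces `π^⌈n/2⌉ ∣ y`.
-/

theorem dvd_add_pow_sub_pow {R : Type*} [CommRing R] {d a z : R} {k : ℕ}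
    (h : ∀ i ∈ Finset.Icc 1 k, d ∣ z ^ i * (k.choose i : R)) : d ∣ (a + z) ^ k - a ^ k := by
  rw [add_comm, add_pow, Finset.sum_range_succ']
  simp only [pow_zero, one_mul, Nat.sub_zero, Nat.choose_zero_right, Nat.cast_one, mul_one,
    add_sub_cancel_right]
  refine Finset.dvd_sum fun j hj => ?_
  rw [mul_right_comm]
  exact (h (j + 1) (by simp at hj ⊢; omega)).mul_right _

theorem Nat.pow_sub_padicValNat_dvd_choose {p k i : ℕ} [Fact p.Prime] (hi : 0 < i)
    (hik : i ≤ k) : p ^ (padicValNat p k - padicValNat p i) ∣ k.choose i := by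
  have hchoose : k.choose i ≠ 0 := (Nat.choose_pos hik).ne'
  have hk_mul : k * (k - 1).choose (i - 1) = k.choose i * i := by
    have := Nat.add_one_mul_choose_eq (k - 1) (i - 1)
    rwa [Nat.sub_add_cancel (by omega), Nat.sub_add_cancel hi] at this
  have hval : padicValNat p k ≤ padicValNat p (k.choose i) + padicValNat p i := by
    rw [← padicValNat.mul hchoose hi.ne', ← hk_mul]
    exact (padicValNat_dvd_iff_le (hk_mul ▸ mul_ne_zero hchoose hi.ne')).mp
      (pow_padicValNat_dvd.mul_right _)
  exact (pow_dvd_pow p (by omega)).trans pow_padicValNat_dvd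

theorem dvd_sq_pow_mul_of_dvd {M : Type*} [CommMonoid M] {π y : M} {n c q i : ℕ}
    (h : π ^ n ∣ π ^ ((q + 1) * c) * y) (hqi : q + 1 ≤ 2 * i) : π ^ n ∣ (π ^ (i * c) * y) ^ 2 := by
  obtain ⟨d, hd⟩ : ∃ d, i * c * 2 = (q + 1) * c + d :=
    ⟨_, (Nat.add_sub_of_le (by nlinarith)).symm⟩
  refine h.trans ⟨π ^ d * y, ?_⟩
  rw [mul_pow, ← pow_mul, hd, pow_add, sq, mul_mul_mul_comm]

namespace IsDiscreteValuationRing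

variable {R : Type*} [CommRing R] [IsDomain R] [IsDiscreteValuationRing R]

theorem pow_dvd_of_pow_dvd_sq {π : R} (hπ : Irreducible π) {n : ℕ} {x : R}
    (h : π ^ n ∣ x ^ 2) : π ^ ((n + 1) / 2) ∣ x := by
  rcases eq_or_ne x 0 with rfl | hx
  · exact dvd_zero _
  obtain ⟨m, u, rfl⟩ := eq_unit_mul_pow_irreducible hx hπ
  rw [mul_pow, ← pow_mul, ← Units.val_pow_eq_pow_val, Units.dvd_mul_left,
    pow_dvd_pow_iff hπ.ne_zero hπ.not_isUnit] at h
  exact (pow_dvd_pow π (by omega)).trans (Dvd.intro_left _ rfl)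

end IsDiscreteValuationRing

theorem kth_power_congruence_general
    (R : Type*) [CommRing R] [IsDomain R] [IsDiscreteValuationRing R]
    (π : R) (hπ : Irreducible π) (p : ℕ) (hp : p.Prime)
    (k : ℕ) (v : ℕ) (hv : v = padicValNat p k) (n : ℕ)
    (c : ℕ)
    (hc : c = sInf {s : ℕ | ∀ r ≤ v, π ^ n ∣ π ^ ((p ^ r + 1) * s) * (p : R) ^ (v - r)})
    (a : R) (z : R) (hz : z ∈ Ideal.span {π} ^ c) :
    (a + z) ^ k - a ^ k ∈ Ideal.span {π} ^ ((n + 1) / 2) := by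
  have : Fact p.Prime := ⟨hp⟩
  have hc_mem : c ∈ {s : ℕ | ∀ r ≤ v, π ^ n ∣ π ^ ((p ^ r + 1) * s) * (p : R) ^ (v - r)} :=
    hc ▸ Nat.sInf_mem ⟨n, fun r _ =>
      (pow_dvd_pow π (Nat.le_mul_of_pos_left n (Nat.succ_pos _))).mul_right _⟩
  rw [Ideal.span_singleton_pow, Ideal.mem_span_singleton] at hz ⊢
  refine dvd_add_pow_sub_pow fun i hi => ?_
  obtain ⟨hi0, hik⟩ := Finset.mem_Icc.mp hi
  set r := min v (padicValNat p i)
  have hpr : p ^ r ≤ i := (Nat.pow_le_pow_right hp.pos (min_le_right _ _)).trans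
    (Nat.le_of_dvd hi0 pow_padicValNat_dvd)
  have hchoose : (p : R) ^ (v - r) ∣ k.choose i := by
    rw [show v - r = padicValNat p k - padicValNat p i by omega, ← Nat.cast_pow]
    exact Nat.cast_dvd_cast (Nat.pow_sub_padicValNat_dvd_choose hi0 hik)
  refine (IsDiscreteValuationRing.pow_dvd_of_pow_dvd_sq hπ
    (dvd_sq_pow_mul_of_dvd (hc_mem r (min_le_left _ _)) (i := i) (by omega))).trans ?_
  rw [mul_comm i, pow_mul]
  exact mul_dvd_mul (pow_dvd_pow_of_dvd hz i) hchoose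

/-- Let `R` be a discrete valuation ring with uniformizer `π` and residue characteristic `p`,
`k ≥ 2` with `v = v_p(k)`, `n ≥ 2`, and
`c = min {s : π^{(p^r+1)s} p^{v-r} ≡ 0 mod π^n for all r ≤ v}`. Then for every `a ∈ R` and
`z ∈ π^c R`, `a^k ≡ (a+z)^k mod π^{⌈n/2⌉}`. -/
theorem kth_power_congruence
    (R : Type*) [CommRing R] [IsDomain R] [IsDiscreteValuationRing R]
    (π : R) (hπ : Irreducible π) (p : ℕ) (hp : p.Prime)
    [CharP (R ⧸ Ideal.span {π}) p]
    (k : ℕ) (hk : 2 ≤ k) (v : ℕ) (hv : v = padicValNat p k) (n : ℕ) (hn : 2 ≤ n)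
    (c : ℕ)
    (hc : c = sInf {s : ℕ | ∀ r ≤ v, π ^ n ∣ π ^ ((p ^ r + 1) * s) * (p : R) ^ (v - r)})
    (a : R) (z : R) (hz : z ∈ Ideal.span {π} ^ c) :
    (a + z) ^ k - a ^ k ∈ Ideal.span {π} ^ ((n + 1) / 2) :=
  kth_power_congruence_general R π hπ p hp k v hv n c hc a z hz
end

section
/- Let p be a prime, k an integer with v = v_p(k), and i an integer with p^r ≤ i < p^{r+1} for some r ≤ v. Then the p-adic valuation of the binomial coefficient binom(k, i) is at least v - r. -/
/-!
Since `i * binom(k, i) = k * binom(k - 1, i - 1)`, comparing `p`-adic valuations gives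
`v_p(k) ≤ v_p(binom(k, i)) + v_p(i)` whenever `0 < i ≤ k`, and `v_p(i) ≤ r` because
`i < p^(r+1)`. When `i > k` the binomial coefficient vanishes, but then `k < p^(r+1)` forces
`v ≤ r`, so the bound is trivial.
-/

lemma padicValNat_le_of_lt_pow {p n r : ℕ} (h : n < p ^ (r + 1)) : padicValNat p n ≤ r := by
  rcases eq_or_ne n 0 with rfl | hn
  · simp
  · exact (padicValNat_le_nat_log n).trans (Nat.lt_succ_iff.mp (Nat.log_lt_of_lt_pow hn h))

lemma padicValNat_le_padicValNat_choose_add {p : ℕ} [Fact p.Prime] {k i : ℕ} (hi : 0 < i)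
    (hik : i ≤ k) : padicValNat p k ≤ padicValNat p (k.choose i) + padicValNat p i := by
  obtain ⟨n, rfl⟩ : ∃ n, k = n + 1 := ⟨k - 1, by omega⟩
  obtain ⟨j, rfl⟩ : ∃ j, i = j + 1 := ⟨i - 1, by omega⟩
  have hchoose : (n + 1).choose (j + 1) ≠ 0 := (Nat.choose_pos hik).ne'
  have hval := congrArg (padicValNat p) (Nat.add_one_mul_choose_eq n j)
  rw [padicValNat.mul n.add_one_ne_zero (Nat.choose_pos (by omega)).ne',
    padicValNat.mul hchoose j.add_one_ne_zero] at hval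
  omega

theorem padicValNat_choose_lower_bound_general (p : ℕ) (hp : p.Prime) (k : ℕ)
    (v : ℕ) (hv : v = padicValNat p k) (r i : ℕ)
    (hi₁ : p ^ r ≤ i) (hi₂ : i < p ^ (r + 1)) :
    v - r ≤ padicValNat p (k.choose i) := by
  have : Fact p.Prime := ⟨hp⟩
  have hvi : padicValNat p i ≤ r := padicValNat_le_of_lt_pow hi₂
  rcases le_or_gt i k with hik | hki
  · have hi : 0 < i := (pow_pos hp.pos r).trans_le hi₁
    have hkey := padicValNat_le_padicValNat_choose_add (p := p) hi hik
    omega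
  · have hvr : v ≤ r := hv ▸ padicValNat_le_of_lt_pow (hki.trans hi₂)
    omega

/-- For a prime `p`, a positive integer `k` with `v = v_p(k)`, and `i` with
`p^r ≤ i < p^(r+1)` for some `r ≤ v`, the `p`-adic valuation of `binom(k, i)`
is at least `v - r`. -/
theorem padicValNat_choose_lower_bound (p : ℕ) (hp : p.Prime) (k : ℕ) (hk : 0 < k)
    (v : ℕ) (hv : v = padicValNat p k) (r i : ℕ) (hr : r ≤ v)
    (hi₁ : p ^ r ≤ i) (hi₂ : i < p ^ (r + 1)) :
    v - r ≤ padicValNat p (k.choose i) :=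
  padicValNat_choose_lower_bound_general p hp k v hv r i hi₁ hi₂
end

section
/- Let 𝔽_q[T], π irreducible, n ≥ 2, N = n·deg(π) - 1. Let 𝒬 be the set of pairs (g,h) of coprime monic polynomials prime to π with a ≡ βg/h mod π^{n-1} for some β ∈ 𝔽_q^×, where a ∈ (𝔽_q[T]/π^n)^× is fixed. Then the number of (g,h) ∈ 𝒬 with q^N/|π|² < |g||h| ≤ q^N is at most n·deg(π)·(q-1)·|π|, where |f| = q^{deg f}. -/
/-!
Send a pair `(g, h)` to the triple `(deg h, β, t)`, where `g/h ≡ β⁻¹a + π^{n-1} t (mod π^n)` with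
`deg t < deg π`; here `β⁻¹a` is reduced mod `π^{n-1}`, so it depends only on `β`. There are at most
`n deg π · (q - 1) · |π|` such triples. Two pairs with the same triple satisfy
`π^n ∣ g₁h₂ - g₂h₁`; as `deg h₁ = deg h₂` this difference has degree at most `N < n deg π`, hence
vanishes, and coprimality together with monicity gives `(g₁, h₁) = (g₂, h₂)`.
-/

open Polynomial

theorem Nat.card_le_card_of_total_of_leftUnique {α β : Type*} [Finite β] {S : Set α}
    (P : α → β → Prop) (total : ∀ x ∈ S, ∃ y, P x y)
    (leftUnique : ∀ x ∈ S, ∀ x' ∈ S, ∀ y, P x y → P x' y → x = x') :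
    Nat.card S ≤ Nat.card β := by
  choose f hf using fun x : S => total x x.2
  exact Nat.card_le_card_of_injective f fun x x' e =>
    Subtype.ext (leftUnique x x.2 x' x'.2 _ (hf x) (e ▸ hf x'))

theorem dvd_mul_sub_mul_of_dvd_mul_sub {R : Type*} [CommRing R] {m g₁ h₁ c₁ g₂ h₂ c₂ r : R}
    (hc₁ : m ∣ h₁ * c₁ - 1) (hr₁ : m ∣ g₁ * c₁ - r)
    (hc₂ : m ∣ h₂ * c₂ - 1) (hr₂ : m ∣ g₂ * c₂ - r) :
    m ∣ g₁ * h₂ - g₂ * h₁ := by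
  have e : g₁ * h₂ - g₂ * h₁ = h₁ * h₂ * (g₁ * c₁ - r) - h₁ * h₂ * (g₂ * c₂ - r)
      - g₁ * h₂ * (h₁ * c₁ - 1) + g₂ * h₁ * (h₂ * c₂ - 1) := by ring
  rw [e]
  exact dvd_add (dvd_sub (dvd_sub (hr₁.mul_left _) (hr₂.mul_left _)) (hc₁.mul_left _))
    (hc₂.mul_left _)

namespace Polynomial

theorem dvd_C_inv_mul_mul_sub_of_dvd {R : Type*} [CommRing R] {m a h g : R[X]} (β : Rˣ)
    (hβ : m ∣ a * h - C (β : R) * g) :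
    m ∣ C ((β⁻¹ : Rˣ) : R) * a * h - g := by
  have e : C ((β⁻¹ : Rˣ) : R) * a * h - g = C ((β⁻¹ : Rˣ) : R) * (a * h - C (β : R) * g) := by
    rw [mul_sub, ← mul_assoc, ← mul_assoc, ← C_mul, Units.inv_mul, C_1, one_mul, mul_assoc]
  exact e ▸ hβ.mul_left _

section Domain

variable {R : Type*} [CommRing R] [IsDomain R]

theorem eq_of_mul_eq_mul_of_monic_of_isCoprime {g₁ h₁ g₂ h₂ : R[X]} (hg₁ : g₁.Monic)
    (hg₂ : g₂.Monic) (hcop₁ : IsCoprime g₁ h₁) (hcop₂ : IsCoprime g₂ h₂)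
    (h : g₁ * h₂ = g₂ * h₁) : g₁ = g₂ ∧ h₁ = h₂ := by
  have hg : g₁ = g₂ := eq_of_monic_of_associated hg₁ hg₂ <| associated_of_dvd_dvd
    (hcop₁.dvd_of_dvd_mul_right ⟨h₂, h.symm⟩) (hcop₂.dvd_of_dvd_mul_right ⟨h₁, h⟩)
  subst hg
  exact ⟨rfl, (mul_left_cancel₀ hg₁.ne_zero h).symm⟩

theorem eq_of_dvd_mul_sub_mul_of_natDegree_lt {m g₁ h₁ g₂ h₂ : R[X]} (hg₁ : g₁.Monic)
    (hg₂ : g₂.Monic) (hcop₁ : IsCoprime g₁ h₁) (hcop₂ : IsCoprime g₂ h₂)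
    (hdeg : h₁.natDegree = h₂.natDegree) (hlt₁ : g₁.natDegree + h₁.natDegree < m.natDegree)
    (hlt₂ : g₂.natDegree + h₂.natDegree < m.natDegree) (hm : m ∣ g₁ * h₂ - g₂ * h₁) :
    g₁ = g₂ ∧ h₁ = h₂ := by
  refine eq_of_mul_eq_mul_of_monic_of_isCoprime hg₁ hg₂ hcop₁ hcop₂
    (sub_eq_zero.mp (eq_zero_of_dvd_of_natDegree_lt hm ?_))
  calc (g₁ * h₂ - g₂ * h₁).natDegree
      ≤ max (g₁ * h₂).natDegree (g₂ * h₁).natDegree := natDegree_sub_le _ _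
    _ ≤ max (g₁.natDegree + h₁.natDegree) (g₂.natDegree + h₂.natDegree) := by
      rw [hdeg]
      exact max_le_max natDegree_mul_le (hdeg ▸ natDegree_mul_le)
    _ < m.natDegree := max_lt hlt₁ hlt₂

end Domain

instance {R : Type*} [Semiring R] [Finite R] (d : ℕ) : Finite (degreeLT R d) :=
  .of_equiv _ (degreeLTEquiv R d).toEquiv.symm

theorem natCard_degreeLT {R : Type*} [Semiring R] (d : ℕ) :
    Nat.card (degreeLT R d) = Nat.card R ^ d := by
  simp [Nat.card_congr (degreeLTEquiv R d).toEquiv, Nat.card_fun]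

section Field

variable {K : Type*} [Field K]

theorem exists_degree_lt_mul_dvd_sub {p q x s : K[X]} (hq : q ≠ 0) (h : p ∣ x - s) :
    ∃ t : K[X], t.degree < q.degree ∧ p * q ∣ x - (s % p + p * t) := by
  obtain ⟨u, hu⟩ := h
  refine ⟨(u + s / p) % q, degree_mod_lt _ hq, (u + s / p) / q, ?_⟩
  linear_combination hu - EuclideanDomain.div_add_mod s p
    - p * EuclideanDomain.div_add_mod (u + s / p) q

theorem exists_inverse_residue_eq_add_mul {π g h s : K[X]} {n : ℕ} (hπ : Irreducible π)
    (hn : n ≠ 0) (hh : ¬ π ∣ h) (hs : π ^ (n - 1) ∣ s * h - g) :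
    ∃ c t : K[X], π ^ n ∣ h * c - 1 ∧ t.degree < π.degree ∧
      π ^ n ∣ g * c - (s % π ^ (n - 1) + π ^ (n - 1) * t) := by
  obtain ⟨u, c, huc⟩ : IsCoprime (π ^ n) h := (hπ.coprime_iff_not_dvd.mpr hh).pow_left
  have hc : π ^ n ∣ h * c - 1 := ⟨-u, by linear_combination huc⟩
  have hgc : π ^ (n - 1) ∣ g * c - s := by
    have e : g * c - s = s * (h * c - 1) - c * (s * h - g) := by ring
    rw [e]
    exact dvd_sub (((pow_dvd_pow π (n.sub_le 1)).trans hc).mul_left _) (hs.mul_left _)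
  obtain ⟨t, ht, hdvd⟩ := exists_degree_lt_mul_dvd_sub hπ.ne_zero hgc
  exact ⟨c, t, hc, ht, pow_sub_one_mul hn π ▸ hdvd⟩

end Field

end Polynomial

open Polynomial in
theorem count_diagonal_pairs_general
    (𝔽q : Type*) [Field 𝔽q] [Fintype 𝔽q]
    (π : Polynomial 𝔽q) (hπ : Irreducible π) (n : ℕ) (hn : 2 ≤ n)
    (N : ℕ) (hN : N = n * π.natDegree - 1)
    (a : Polynomial 𝔽q) :
    Nat.card {gh : Polynomial 𝔽q × Polynomial 𝔽q |
        gh.1.Monic ∧ gh.2.Monic ∧ ¬ π ∣ gh.1 ∧ ¬ π ∣ gh.2 ∧ IsCoprime gh.1 gh.2 ∧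
        (∃ β : 𝔽qˣ, π ^ (n - 1) ∣ a * gh.2 - Polynomial.C (β : 𝔽q) * gh.1) ∧
        N - 2 * π.natDegree < gh.1.natDegree + gh.2.natDegree ∧
        gh.1.natDegree + gh.2.natDegree ≤ N} ≤
      n * π.natDegree * (Fintype.card 𝔽q - 1) * Fintype.card 𝔽q ^ π.natDegree := by
  have hnD : 0 < n * π.natDegree := Nat.mul_pos (by omega) hπ.natDegree_pos
  have hπn : (π ^ n).natDegree = n * π.natDegree := natDegree_pow π n
  have hcard : Nat.card (Fin (n * π.natDegree) × 𝔽qˣ × degreeLT 𝔽q π.natDegree) =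
      n * π.natDegree * (Fintype.card 𝔽q - 1) * Fintype.card 𝔽q ^ π.natDegree := by
    simp [Nat.card_units, natCard_degreeLT, mul_assoc]
  rw [← hcard]
  refine Nat.card_le_card_of_total_of_leftUnique (fun gh y => (y.1 : ℕ) = gh.2.natDegree ∧
    ∃ c, π ^ n ∣ gh.2 * c - 1 ∧
      π ^ n ∣ gh.1 * c - ((C ((y.2.1⁻¹ : 𝔽qˣ) : 𝔽q) * a) % π ^ (n - 1) + π ^ (n - 1) * y.2.2))
    ?_ ?_
  · rintro ⟨g, h⟩ ⟨-, -, -, hhπ, -, ⟨β, hβ⟩, -, hup⟩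
    dsimp only at hup hβ
    obtain ⟨c, t, hc, ht, hr⟩ := exists_inverse_residue_eq_add_mul hπ (by omega) hhπ
      (dvd_C_inv_mul_mul_sub_of_dvd β hβ)
    exact ⟨(⟨h.natDegree, by omega⟩, β,
      ⟨t, mem_degreeLT.mpr (degree_eq_natDegree hπ.ne_zero ▸ ht)⟩), rfl, c, hc, hr⟩
  · rintro ⟨g₁, h₁⟩ ⟨hg₁, -, -, -, hcop₁, -, -, hup₁⟩ ⟨g₂, h₂⟩ ⟨hg₂, -, -, -, hcop₂, -, -, hup₂⟩
      y ⟨hd₁, c₁, hc₁, hr₁⟩ ⟨hd₂, c₂, hc₂, hr₂⟩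
    dsimp only at *
    obtain ⟨rfl, rfl⟩ := eq_of_dvd_mul_sub_mul_of_natDegree_lt hg₁ hg₂ hcop₁ hcop₂
      (hd₁.symm.trans hd₂) (by omega) (by omega) (dvd_mul_sub_mul_of_dvd_mul_sub hc₁ hr₁ hc₂ hr₂)
    rfl

open Polynomial in
/-- The number of coprime monic pairs `(g,h)` prime to `π` with `a ≡ βg/h mod π^{n-1}` for some
`β ∈ 𝔽_q^×` and `q^N/|π|² < |g||h| ≤ q^N`, where `N = n·deg π - 1`, is at most
`n · deg π · (q-1) · |π|`. -/
theorem count_diagonal_pairs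
    (𝔽q : Type*) [Field 𝔽q] [Fintype 𝔽q]
    (π : Polynomial 𝔽q) (hπ : Irreducible π) (n : ℕ) (hn : 2 ≤ n)
    (N : ℕ) (hN : N = n * π.natDegree - 1)
    (a : Polynomial 𝔽q) (ha : ¬ π ∣ a) :
    Nat.card {gh : Polynomial 𝔽q × Polynomial 𝔽q |
        gh.1.Monic ∧ gh.2.Monic ∧ ¬ π ∣ gh.1 ∧ ¬ π ∣ gh.2 ∧ IsCoprime gh.1 gh.2 ∧
        (∃ β : 𝔽qˣ, π ^ (n - 1) ∣ a * gh.2 - Polynomial.C (β : 𝔽q) * gh.1) ∧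
        N - 2 * π.natDegree < gh.1.natDegree + gh.2.natDegree ∧
        gh.1.natDegree + gh.2.natDegree ≤ N} ≤
      n * π.natDegree * (Fintype.card 𝔽q - 1) * Fintype.card 𝔽q ^ π.natDegree :=
  count_diagonal_pairs_general 𝔽q π hπ n hn N hN a
end
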